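/- Let 𝔤 be a finite-dimensional real Lie algebra with nondegenerate invariant symmetric bilinear form ⟨·,·⟩ and orthonormal basis e₁,…,eₙ. Let l : 𝔤⊗𝔤 → 𝔤 be induced by the bracket, l(x⊗y) = [x,y], and let I : 𝔤⊗𝔤 → ℝ be induced by the bilinear form, I(x⊗y) = ⟨x,y⟩. Then for all antisymmetric tensors a = eᵢ⊗eⱼ − eⱼ⊗eᵢ and b = e_k⊗e_l − e_l⊗e_k: Tr⊠²(a ⊗ b ⊗ Σₙ eₙ⊗eₙ) = (1/2)·I(l(a) ⊗ l(b)), where Tr⊠²((x₁⊗y₁)⊗(x₂⊗y₂)⊗(x₃⊗y₃)) = ⟨[x₁,x₂],x₃⟩·⟨[y₁,y₂],y₃⟩. -/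

import Mathlib

open TensorProduct

/-!
Expanding the Casimir tensor `∑ₚ eₚ ⊗ eₚ` in the orthonormal basis contracts
`Tr⊠²((x₁ ⊗ y₁) ⊗ (x₂ ⊗ y₂) ⊗ ∑ₚ eₚ ⊗ eₚ)` to `⟨[x₁, x₂], [y₁, y₂]⟩`. For `a = x ⊗ y - y ⊗ x` and
`b = z ⊗ w - w ⊗ z`, symmetry of the form pairs the four resulting terms into
`2 (⟨[x, z], [y, w]⟩ - ⟨[x, w], [y, z]⟩)`, and the Jacobi identity moved across the invariant form
turns this into `2 ⟨[x, y], [z, w]⟩`. Since `l a = 2 [x, y]` and `l b = 2 [z, w]`, this is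
`½ I (l a ⊗ l b)`.
-/

namespace LinearMap.BilinForm

variable {R M : Type*} [CommRing R] [AddCommGroup M] [Module R M]

theorem apply_basis_eq_repr_of_orthonormal {ι : Type*} [Fintype ι] [DecidableEq ι]
    (B : LinearMap.BilinForm R M) (e : Module.Basis ι R M)
    (horth : ∀ i j, B (e i) (e j) = if i = j then 1 else 0) (x : M) (p : ι) :
    B x (e p) = e.repr x p := by
  calc B x (e p) = B (∑ q, e.repr x q • e q) (e p) := by rw [e.sum_repr]
    _ = e.repr x p := by
      simp only [map_sum, map_smul, LinearMap.sum_apply, LinearMap.smul_apply, horth,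
        smul_eq_mul, mul_ite, mul_one, mul_zero, Finset.sum_ite_eq', Finset.mem_univ, if_true]

theorem sum_apply_basis_mul_apply_basis {ι : Type*} [Fintype ι] [DecidableEq ι]
    (B : LinearMap.BilinForm R M) (e : Module.Basis ι R M)
    (horth : ∀ i j, B (e i) (e j) = if i = j then 1 else 0) (x y : M) :
    ∑ p, B x (e p) * B y (e p) = B x y := by
  calc ∑ p, B x (e p) * B y (e p) = ∑ p, e.repr y p * B x (e p) := by
        simp [apply_basis_eq_repr_of_orthonormal B e horth, mul_comm]
    _ = B x (∑ p, e.repr y p • e p) := by simp only [map_sum, map_smul, smul_eq_mul]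
    _ = B x y := by rw [e.sum_repr]

variable {L : Type*} [LieRing L] [LieAlgebra R L]

theorem apply_lie_lie_eq_sub (B : LinearMap.BilinForm R L)
    (hinv : ∀ a b c : L, B ⁅a, b⁆ c = B a ⁅b, c⁆) (a b c d : L) :
    B ⁅a, b⁆ ⁅c, d⁆ = B ⁅a, c⁆ ⁅b, d⁆ - B ⁅a, d⁆ ⁅b, c⁆ := by
  calc B ⁅a, b⁆ ⁅c, d⁆ = B a ⁅b, ⁅c, d⁆⁆ := hinv a b ⁅c, d⁆
    _ = B a ⁅c, ⁅b, d⁆⁆ - B a ⁅d, ⁅b, c⁆⁆ := by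
      rw [leibniz_lie, ← lie_skew d ⁅b, c⁆, map_add, map_neg, sub_neg_eq_add, add_comm]
    _ = B ⁅a, c⁆ ⁅b, d⁆ - B ⁅a, d⁆ ⁅b, c⁆ := by rw [hinv a c, hinv a d]

end LinearMap.BilinForm

section TrBoxSq

variable {R L ι : Type*} [CommRing R] [LieRing L] [LieAlgebra R L] [Fintype ι] [DecidableEq ι]
  (B : LinearMap.BilinForm R L) (e : Module.Basis ι R L)
  (Φ : (L ⊗[R] L) ⊗[R] ((L ⊗[R] L) ⊗[R] (L ⊗[R] L)) →ₗ[R] R)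

theorem trBoxSq_tmul_tmul_casimir (horth : ∀ i j, B (e i) (e j) = if i = j then 1 else 0)
    (hΦ : ∀ x₁ y₁ x₂ y₂ x₃ y₃ : L,
      Φ ((x₁ ⊗ₜ y₁) ⊗ₜ ((x₂ ⊗ₜ y₂) ⊗ₜ (x₃ ⊗ₜ y₃))) = B ⁅x₁, x₂⁆ x₃ * B ⁅y₁, y₂⁆ y₃)
    (x₁ y₁ x₂ y₂ : L) :
    Φ ((x₁ ⊗ₜ y₁) ⊗ₜ ((x₂ ⊗ₜ y₂) ⊗ₜ ∑ p, e p ⊗ₜ e p)) = B ⁅x₁, x₂⁆ ⁅y₁, y₂⁆ := by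
  simp only [tmul_sum, map_sum, hΦ]
  exact B.sum_apply_basis_mul_apply_basis e horth _ _

theorem trBoxSq_antisymm_tmul_casimir (horth : ∀ i j, B (e i) (e j) = if i = j then 1 else 0)
    (hΦ : ∀ x₁ y₁ x₂ y₂ x₃ y₃ : L,
      Φ ((x₁ ⊗ₜ y₁) ⊗ₜ ((x₂ ⊗ₜ y₂) ⊗ₜ (x₃ ⊗ₜ y₃))) = B ⁅x₁, x₂⁆ x₃ * B ⁅y₁, y₂⁆ y₃)
    (hsymm : ∀ a b : L, B a b = B b a)
    (hinv : ∀ a b c : L, B ⁅a, b⁆ c = B a ⁅b, c⁆) (x y z w : L) :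
    Φ ((x ⊗ₜ y - y ⊗ₜ x) ⊗ₜ ((z ⊗ₜ w - w ⊗ₜ z) ⊗ₜ ∑ p, e p ⊗ₜ e p))
      = 2 * B ⁅x, y⁆ ⁅z, w⁆ := by
  simp only [sub_tmul, tmul_sub, map_sub, trBoxSq_tmul_tmul_casimir B e Φ horth hΦ]
  rw [hsymm ⁅y, z⁆, hsymm ⁅y, w⁆, B.apply_lie_lie_eq_sub hinv x y z w]
  ring

end TrBoxSq

theorem trBoxSq_eq_half_I_l_general {𝔤 : Type*} [LieRing 𝔤] [LieAlgebra ℝ 𝔤]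
    {n : ℕ} (B : LinearMap.BilinForm ℝ 𝔤)
    (hsymm : ∀ a b : 𝔤, B a b = B b a)
    (hinv : ∀ a b c : 𝔤, B ⁅a, b⁆ c = B a ⁅b, c⁆)
    (e : Module.Basis (Fin n) ℝ 𝔤)
    (horth : ∀ i j, B (e i) (e j) = if i = j then 1 else 0)
    (l : TensorProduct ℝ 𝔤 𝔤 →ₗ[ℝ] 𝔤) (hl : ∀ x y : 𝔤, l (x ⊗ₜ[ℝ] y) = ⁅x, y⁆)
    (I : TensorProduct ℝ 𝔤 𝔤 →ₗ[ℝ] ℝ) (hI : ∀ x y : 𝔤, I (x ⊗ₜ[ℝ] y) = B x y)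
    (Φ : TensorProduct ℝ (TensorProduct ℝ 𝔤 𝔤)
      (TensorProduct ℝ (TensorProduct ℝ 𝔤 𝔤) (TensorProduct ℝ 𝔤 𝔤)) →ₗ[ℝ] ℝ)
    (hΦ : ∀ x₁ y₁ x₂ y₂ x₃ y₃ : 𝔤,
      Φ ((x₁ ⊗ₜ[ℝ] y₁) ⊗ₜ[ℝ] ((x₂ ⊗ₜ[ℝ] y₂) ⊗ₜ[ℝ] (x₃ ⊗ₜ[ℝ] y₃)))
        = B ⁅x₁, x₂⁆ x₃ * B ⁅y₁, y₂⁆ y₃)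
    (i j k m : Fin n) :
    Φ ((e i ⊗ₜ[ℝ] e j - e j ⊗ₜ[ℝ] e i) ⊗ₜ[ℝ]
        ((e k ⊗ₜ[ℝ] e m - e m ⊗ₜ[ℝ] e k) ⊗ₜ[ℝ] (∑ p, e p ⊗ₜ[ℝ] e p)))
      = (1 / 2) * I (l (e i ⊗ₜ[ℝ] e j - e j ⊗ₜ[ℝ] e i)
          ⊗ₜ[ℝ] l (e k ⊗ₜ[ℝ] e m - e m ⊗ₜ[ℝ] e k)) := by
  have l_antisymm : ∀ x y : 𝔤, l (x ⊗ₜ y - y ⊗ₜ x) = (2 : ℝ) • ⁅x, y⁆ := fun x y => by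
    rw [map_sub, hl, hl, ← lie_skew y x, sub_neg_eq_add, two_smul]
  rw [trBoxSq_antisymm_tmul_casimir B e Φ horth hΦ hsymm hinv, l_antisymm, l_antisymm, hI,
    map_smul, map_smul, LinearMap.smul_apply, smul_eq_mul, smul_eq_mul]
  ring

/-- On antisymmetric tensors `a = eᵢ⊗eⱼ − eⱼ⊗eᵢ`, `b = e_k⊗e_l − e_l⊗e_k`,
`Tr⊠²(a ⊗ b ⊗ Σₙ eₙ⊗eₙ) = (1/2)·I(l(a) ⊗ l(b))`. -/
theorem trBoxSq_eq_half_I_l {𝔤 : Type*} [LieRing 𝔤] [LieAlgebra ℝ 𝔤]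
    [Module.Finite ℝ 𝔤] {n : ℕ} (B : LinearMap.BilinForm ℝ 𝔤)
    (hsymm : ∀ a b : 𝔤, B a b = B b a) (hnd : B.Nondegenerate)
    (hinv : ∀ a b c : 𝔤, B ⁅a, b⁆ c = B a ⁅b, c⁆)
    (e : Module.Basis (Fin n) ℝ 𝔤)
    (horth : ∀ i j, B (e i) (e j) = if i = j then 1 else 0)
    (l : TensorProduct ℝ 𝔤 𝔤 →ₗ[ℝ] 𝔤) (hl : ∀ x y : 𝔤, l (x ⊗ₜ[ℝ] y) = ⁅x, y⁆)
    (I : TensorProduct ℝ 𝔤 𝔤 →ₗ[ℝ] ℝ) (hI : ∀ x y : 𝔤, I (x ⊗ₜ[ℝ] y) = B x y)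
    (Φ : TensorProduct ℝ (TensorProduct ℝ 𝔤 𝔤)
      (TensorProduct ℝ (TensorProduct ℝ 𝔤 𝔤) (TensorProduct ℝ 𝔤 𝔤)) →ₗ[ℝ] ℝ)
    (hΦ : ∀ x₁ y₁ x₂ y₂ x₃ y₃ : 𝔤,
      Φ ((x₁ ⊗ₜ[ℝ] y₁) ⊗ₜ[ℝ] ((x₂ ⊗ₜ[ℝ] y₂) ⊗ₜ[ℝ] (x₃ ⊗ₜ[ℝ] y₃)))
        = B ⁅x₁, x₂⁆ x₃ * B ⁅y₁, y₂⁆ y₃)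
    (i j k m : Fin n) :
    Φ ((e i ⊗ₜ[ℝ] e j - e j ⊗ₜ[ℝ] e i) ⊗ₜ[ℝ]
        ((e k ⊗ₜ[ℝ] e m - e m ⊗ₜ[ℝ] e k) ⊗ₜ[ℝ] (∑ p, e p ⊗ₜ[ℝ] e p)))
      = (1 / 2) * I (l (e i ⊗ₜ[ℝ] e j - e j ⊗ₜ[ℝ] e i)
          ⊗ₜ[ℝ] l (e k ⊗ₜ[ℝ] e m - e m ⊗ₜ[ℝ] e k)) :=
  trBoxSq_eq_half_I_l_general B hsymm hinv e horth l hl I hI Φ hΦ i j k m
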